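/- Let n be sufficiently large, let G̃ be an n-fit graph with vertex set V whose edges are colored red and blue, and let V1, V2 ⊆ V be disjoint sets with |V1|, |V2| ≥ 0.99n such that every edge of G̃ with one end in V1 and the other in V2 is blue. If there exists a vertex w ∈ V with at least n^{0.9} blue neighbors in V1 and at least n^{0.9} blue neighbors in V2, then the blue graph contains a cycle C_ℓ for every ℓ with 3 ≤ ℓ ≤ n. -/

import Mathlib

open SimpleGraph

/-- `e(S,T)`: the number of ordered pairs `(v,w)` with `v ∈ S`, `w ∈ T` and `v` adjacent to `w`;
this counts edges with one end in `S` and the other in `T`, edges inside `S ∩ T` twice. -/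
noncomputable def interCount {V : Type} (G : SimpleGraph V) (S T : Set V) : ℕ :=
  {p : V × V | p.1 ∈ S ∧ p.2 ∈ T ∧ G.Adj p.1 p.2}.ncard

/-- The degree of a vertex. -/
noncomputable def degCount {V : Type} (G : SimpleGraph V) (v : V) : ℕ :=
  (G.neighborSet v).ncard

/-- The codegree of a pair of vertices. -/
noncomputable def codegCount {V : Type} (G : SimpleGraph V) (v w : V) : ℕ :=
  (G.neighborSet v ∩ G.neighborSet w).ncard

/-- A graph is `n`-fit if it has `2n-1` vertices, `⌈(n+1)(2n-1)/2⌉` edges, minimum degree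
exactly `n+1`, all codegrees within `n^0.7` of `n/2`, and `|e(S,T) - |S||T|/2| ≤ n^1.7`
for all vertex sets `S`, `T`. -/
def IsNFit {V : Type} (n : ℕ) (G : SimpleGraph V) : Prop :=
  Nat.card V = 2 * n - 1 ∧
  G.edgeSet.ncard = ((n + 1) * (2 * n - 1) + 1) / 2 ∧
  (∀ v : V, n + 1 ≤ degCount G v) ∧
  (∃ v : V, degCount G v = n + 1) ∧
  (∀ v w : V, v ≠ w → |(codegCount G v w : ℝ) - n / 2| ≤ (n : ℝ) ^ (0.7 : ℝ)) ∧
  (∀ S T : Set V, |(interCount G S T : ℝ) - S.ncard * T.ncard / 2| ≤ (n : ℝ) ^ (1.7 : ℝ))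

/-- `G` contains a cycle of length `m` (a copy of `C_m`). -/
def HasCycleLen {V : Type} (G : SimpleGraph V) (m : ℕ) : Prop :=
  ∃ (v : V) (c : G.Walk v v), c.IsCycle ∧ c.length = m

/-- `G` contains a path of length `k` (with `k` edges) joining `u` and `v`. -/
def HasPathLen {V : Type} (G : SimpleGraph V) (u v : V) (k : ℕ) : Prop :=
  ∃ p : G.Walk u v, p.IsPath ∧ p.length = k

/-- `G → (C_n, C_k)`: every red/blue coloring of the edges of `G` (the red edges forming a
subgraph `R ≤ G`, the blue ones being `G \ R`) yields a red `C_n` or a blue `C_k`. -/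
def ArrowsCC {V : Type} (G : SimpleGraph V) (n k : ℕ) : Prop :=
  ∀ R : SimpleGraph V, R ≤ G → HasCycleLen R n ∨ HasCycleLen (G \ R) k

/-- The density of a pair of vertex sets. -/
noncomputable def dens {V : Type} (G : SimpleGraph V) (S T : Set V) : ℝ :=
  (interCount G S T : ℝ) / (S.ncard * T.ncard)

/-- `(V1, V2)` is an `ε`-regular pair. -/
def IsRegularPair {V : Type} (G : SimpleGraph V) (ε : ℝ) (V1 V2 : Set V) : Prop :=
  ∀ W1 W2 : Set V, W1 ⊆ V1 → W2 ⊆ V2 →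
    ε * V1.ncard ≤ (W1.ncard : ℝ) → ε * V2.ncard ≤ (W2.ncard : ℝ) →
    |dens G V1 V2 - dens G W1 W2| ≤ ε

/-- `(V1, V2)` is a strongly `ε`-regular pair. -/
def IsStronglyRegularPair {V : Type} (G : SimpleGraph V) (ε : ℝ) (V1 V2 : Set V) : Prop :=
  IsRegularPair G ε V1 V2 ∧
  (∀ v ∈ V1, dens G V1 V2 * V2.ncard / 10 ≤ ((G.neighborSet v ∩ V2).ncard : ℝ)) ∧
  (∀ v ∈ V2, dens G V1 V2 * V1.ncard / 10 ≤ ((G.neighborSet v ∩ V1).ncard : ℝ))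

/-- A graph has property `M_t` if it contains a matching saturating `⌈t⌉` vertices which is
contained in a single non-bipartite connected component. -/
def PropertyM {V : Type} (H : SimpleGraph V) (t : ℝ) : Prop :=
  ∃ M : H.Subgraph, M.IsMatching ∧ ⌈t⌉ ≤ (M.verts.ncard : ℤ) ∧
    ∃ c : H.ConnectedComponent, M.verts ⊆ c.supp ∧ ¬ (H.induce c.supp).Colorable 2

/-!
Remove from `V1` and `V2` the `O(n^0.8)` vertices with fewer than `|V_j|/2 - n^0.9` neighbours in
the other set `V_j`, set aside a set `Y` of about `n^0.8` blue neighbours of the hub `w`, and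
remove `w` itself. What remains is a bipartite blue graph of minimum degree close to `n/2` in
which, by the `n^1.7` edge discrepancy, any two sets whose sizes have product `≫ n^1.7` span an
edge. A path starting at a neighbour `x` of `w` can then be grown one vertex at a time up to `n`
vertices: when every neighbour of the endpoint is already on the path, Pósa rotations give close to
`n/2` other endpoints, and one of them has an edge to the close to `n/2` vertices not yet used. All
but `O(n^0.9)` vertices have a neighbour `y ∈ Y`, so the last vertex can be chosen with one,
closing the cycle `w x … y w`; a triangle is an edge between the two neighbourhoods of `w`.
-/

theorem List.countP_le_of_isChain {α : Type} {p : α → Bool} :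
    ∀ {L : List α}, L.IsChain (fun a b => p a → p b = false) → 2 * L.countP p ≤ L.length + 1
  | [], _ => by simp
  | [a], _ => by cases h : p a <;> simp [h]
  | a :: b :: l, hc => by
    have ih := countP_le_of_isChain (List.isChain_cons_cons.mp hc).2
    have ih' := countP_le_of_isChain (List.isChain_cons_cons.mp hc).2.of_cons
    cases ha : p a
    · simp [List.countP_cons, ha] at ih ⊢
      omega
    · have hb : p b = false := (List.isChain_cons_cons.mp hc).1 ha
      simp [ha, hb] at ih' ⊢
      omega

theorem Set.ncard_sub_ncard_le_ncard_sdiff {α : Type} [Finite α] (s t : Set α) :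
    (s.ncard : ℝ) - t.ncard ≤ (s \ t).ncard := by
  have : s.ncard ≤ (s \ t).ncard + t.ncard := Set.ncard_le_ncard_sdiff_add_ncard s t
  linarith [(Nat.cast_le (α := ℝ)).mpr this, Nat.cast_add (R := ℝ) (s \ t).ncard t.ncard]

theorem Real.hundred_mul_rpow_le {x : ℝ} (hx : 10 ^ 20 ≤ x) (a : ℝ) :
    100 * x ^ a ≤ x ^ (a + 0.1) := by
  have hx0 : 0 < x := lt_of_lt_of_le (by norm_num) hx
  have h100 : (100 : ℝ) ≤ x ^ (0.1 : ℝ) := calc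
    (100 : ℝ) = ((10 : ℝ) ^ (20 : ℝ)) ^ (0.1 : ℝ) := by
      rw [← Real.rpow_mul (by norm_num)]; norm_num
    _ ≤ x ^ (0.1 : ℝ) := Real.rpow_le_rpow (by positivity) (by exact_mod_cast hx) (by norm_num)
  rw [Real.rpow_add hx0, mul_comm]
  exact mul_le_mul_of_nonneg_left h100 (Real.rpow_nonneg hx0.le a)

section Alternate

variable {V : Type} {P Q P' Q' : Set V}

/-- The side containing the `t`-th vertex (from `0`) of a path that alternates between `P` and
`Q` and starts in `P`. -/
def alternate (P Q : Set V) (t : ℕ) : Set V := if Even t then P else Q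

theorem alternate_add_two (P Q : Set V) (t : ℕ) : alternate P Q (t + 2) = alternate P Q t := by
  simp [alternate, Nat.even_add]

theorem alternate_induction {p : Set V → Prop} (h : p P) (h' : p Q) (t : ℕ) :
    p (alternate P Q t) := by
  unfold alternate
  split_ifs <;> assumption

theorem alternate_induction_succ {Φ : Set V → Set V → Prop} (h : Φ P Q) (h' : Φ Q P) (t : ℕ) :
    Φ (alternate P Q t) (alternate P Q (t + 1)) := by
  rcases Nat.even_or_odd t with ht | ht
  · simpa [alternate, ht, Nat.even_add_one] using h
  · simpa [alternate, Nat.not_even_iff_odd.mpr ht, Nat.even_add_one] using h'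

theorem alternate_mono (h : P ⊆ P') (h' : Q ⊆ Q') (t : ℕ) :
    alternate P Q t ⊆ alternate P' Q' t := by
  unfold alternate
  split_ifs <;> assumption

end Alternate

namespace SimpleGraph

variable {V : Type} {G H : SimpleGraph V} {S T P Q : Set V} {b d f p : ℝ} {x : V} {L : List V}

theorem interCount_comm (G : SimpleGraph V) (S T : Set V) :
    interCount G S T = interCount G T S := by
  rw [interCount, interCount, ← Set.ncard_image_of_injective _ Prod.swap_injective]
  congr 1
  ext ⟨a, c⟩
  simp only [Set.mem_image, Set.mem_ofPred_eq, Prod.exists, Prod.swap_prod_mk, Prod.mk.injEq]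
  constructor
  · rintro ⟨c', a', ⟨h1, h2, h3⟩, rfl, rfl⟩
    exact ⟨h2, h1, h3.symm⟩
  · rintro ⟨h1, h2, h3⟩
    exact ⟨c, a, ⟨h2, h1, h3.symm⟩, rfl, rfl⟩

theorem interCount_congr (h : ∀ a ∈ S, ∀ c ∈ T, G.Adj a c ↔ H.Adj a c) :
    interCount G S T = interCount H S T := by
  unfold interCount
  congr 1
  ext ⟨a, c⟩
  simp only [Set.mem_ofPred_eq]
  exact and_congr_right fun ha => and_congr_right fun hc => h a ha c hc

theorem interCount_le_of_forall_le [Finite V] {c : ℝ}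
    (h : ∀ v ∈ S, ((G.neighborSet v ∩ T).ncard : ℝ) ≤ c) :
    (interCount G S T : ℝ) ≤ S.ncard * c := by
  classical
  have : Fintype V := Fintype.ofFinite V
  have hcoe : interCount G S T = (G.interedges S.toFinset T.toFinset).card := by
    rw [interCount, ← Set.ncard_coe_finset]
    congr 1
    ext
    simp [mem_interedges_iff]
  calc (interCount G S T : ℝ)
      ≤ ∑ v ∈ S.toFinset, ((G.neighborSet v ∩ T).ncard : ℝ) := by
        rw [hcoe, interedges, Rel.interedges_eq_biUnion]
        refine (Nat.cast_le.mpr Finset.card_biUnion_le).trans ?_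
        push_cast
        refine Finset.sum_le_sum fun v _ => le_of_eq ?_
        rw [Finset.card_map, ← Set.ncard_coe_finset]
        congr 2
        ext
        simp [and_comm]
    _ ≤ ∑ _v ∈ S.toFinset, c := Finset.sum_le_sum fun v hv => h v (Set.mem_toFinset.mp hv)
    _ = S.ncard * c := by simp [Set.ncard_eq_toFinset_card']

theorem exists_adj_of_interCount_pos (h : 0 < interCount G S T) :
    ∃ a ∈ S, ∃ c ∈ T, G.Adj a c := by
  obtain ⟨⟨a, c⟩, ha, hc, hac⟩ := Set.nonempty_of_ncard_ne_zero h.ne'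
  exact ⟨a, ha, c, hc, hac⟩

/-- The lower half of condition (iv) of `IsNFit`, with error `b`, for `S ⊆ P` and `T ⊆ Q`. -/
def HalfDense (G : SimpleGraph V) (b : ℝ) (P Q : Set V) : Prop :=
  ∀ S ⊆ P, ∀ T ⊆ Q, (S.ncard : ℝ) * T.ncard / 2 - b ≤ interCount G S T

namespace HalfDense

theorem symm (h : G.HalfDense b P Q) : G.HalfDense b Q P := fun S hS T hT => by
  rw [interCount_comm, mul_comm]
  exact h T hT S hS

theorem mono {P' Q' : Set V} (h : G.HalfDense b P Q) (hP : P' ⊆ P) (hQ : Q' ⊆ Q) :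
    G.HalfDense b P' Q' := fun S hS T hT => h S (hS.trans hP) T (hT.trans hQ)

theorem between (h : G.HalfDense b P Q) : (G.between P Q).HalfDense b P Q := fun S hS T hT => by
  rw [interCount_congr fun a ha c hc => (between_adj ..).trans (and_iff_left (.inl ⟨hS ha, hT hc⟩))]
  exact h S hS T hT

theorem exists_adj (h : G.HalfDense b P Q) (hS : S ⊆ P) (hT : T ⊆ Q)
    (hb : b < (S.ncard : ℝ) * T.ncard / 2) : ∃ a ∈ S, ∃ c ∈ T, G.Adj a c := by
  have hpos : (0 : ℝ) < interCount G S T := by linarith [h S hS T hT]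
  exact exists_adj_of_interCount_pos (mod_cast hpos)

theorem ncard_mul_le [Finite V] {c : ℝ} (h : G.HalfDense b P Q) (hS : S ⊆ P) (hT : T ⊆ Q)
    (hdeg : ∀ v ∈ S, ((G.neighborSet v ∩ T).ncard : ℝ) ≤ c) :
    (S.ncard : ℝ) * (T.ncard / 2 - c) ≤ b := by
  nlinarith [h S hS T hT, interCount_le_of_forall_le hdeg]

theorem exists_lowDegree_subset [Finite V] (h : G.HalfDense b P Q) (m : ℝ) :
    ∃ X ⊆ P, (X.ncard : ℝ) * m ≤ b ∧
      ∀ v ∈ P \ X, (Q.ncard : ℝ) / 2 - m ≤ (G.neighborSet v ∩ Q).ncard := by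
  refine ⟨{v ∈ P | ((G.neighborSet v ∩ Q).ncard : ℝ) < Q.ncard / 2 - m}, fun v hv => hv.1, ?_,
    fun v hv => not_lt.mp fun hlt => hv.2 ⟨hv.1, hlt⟩⟩
  have := h.ncard_mul_le (S := {v ∈ P | ((G.neighborSet v ∩ Q).ncard : ℝ) < Q.ncard / 2 - m})
    (fun v hv => hv.1) subset_rfl fun v hv => hv.2.le
  ring_nf at this ⊢
  linarith

theorem ncard_sdiff_mul_le [Finite V] (h : G.HalfDense b P Q) :
    ((P \ {v | ∃ y ∈ Q, G.Adj v y}).ncard : ℝ) * Q.ncard ≤ 2 * b := by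
  have := h.ncard_mul_le (S := P \ {v | ∃ y ∈ Q, G.Adj v y}) (c := 0) Set.sdiff_subset subset_rfl
    fun v hv => by
      rw [show G.neighborSet v ∩ Q = ∅ from
        Set.eq_empty_of_forall_notMem fun y hy => hv.2 ⟨y, hy.2, hy.1⟩]
      simp
  linarith

end HalfDense

theorem exists_rotation (hc : L.IsChain G.Adj) {i : ℕ} (hi : i + 1 < L.length) {z : V}
    (hz : L.getLast? = some z) (h : G.Adj L[i] z) :
    ∃ L' : List V, L'.IsChain G.Adj ∧ L'.Perm L ∧ L'.head? = L.head? ∧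
      L'.getLast? = some L[i + 1] := by
  refine ⟨L.take (i + 1) ++ (L.drop (i + 1)).reverse, ?_, ?_, ?_, ?_⟩
  · rw [← List.take_append_drop (i + 1) L] at hc
    obtain ⟨hc₁, hc₂, -⟩ := List.isChain_append.mp hc
    refine hc₁.append (List.isChain_reverse.mpr (hc₂.imp fun _ _ h => h.symm)) fun a ha c hc' => ?_
    have ha : a = L[i] := by
      simpa [List.getLast?_take, List.getElem?_eq_getElem (by omega : i < L.length)] using ha.symm
    have hc' : c = z := by
      simp only [List.head?_reverse, List.getLast?_drop, if_neg (by omega : ¬L.length ≤ i + 1),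
        hz, Option.mem_def, Option.some.injEq] at hc'
      exact hc'.symm
    exact ha ▸ hc' ▸ h
  · simpa using
      (List.perm_append_left_iff (L.take (i + 1))).mpr (List.reverse_perm (L.drop (i + 1)))
  · rw [List.head?_append, List.head?_take, if_neg (by omega)]
    cases L <;> simp_all
  · rw [List.getLast?_append, List.getLast?_reverse, List.head?_drop,
      List.getElem?_eq_getElem hi]
    simp

theorem exists_rotations [Finite V] (hc : L.IsChain G.Adj) (hnd : L.Nodup) {z : V}
    (hz : L.getLast? = some z) {A : Set V} (hA : ∀ u ∈ A, u ∈ L ∧ G.Adj u z) :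
    ∃ R : Set V, A.ncard ≤ R.ncard ∧ ∀ r ∈ R, (∃ u ∈ A, G.Adj u r) ∧
      ∃ L' : List V, L'.IsChain G.Adj ∧ L'.Perm L ∧ L'.head? = L.head? ∧ L'.getLast? = some r := by
  set I : Set ℕ := {i | ∃ h : i + 1 < L.length, L[i] ∈ A}
  have hIfin : I.Finite := (Set.finite_lt_nat L.length).subset fun i ⟨h, _⟩ => by simp; omega
  have hgetD : ∀ i (h : i < L.length), L.getD i z = L[i] := fun i h => by simp [h]
  refine ⟨(fun i => L.getD (i + 1) z) '' I, ?_, ?_⟩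
  · have hAI : A ⊆ (fun i => L.getD i z) '' I := by
      intro u hu
      obtain ⟨i, hi, rfl⟩ := List.mem_iff_getElem.mp (hA _ hu).1
      have hlast : L[L.length - 1] = z := by
        rw [List.getLast?_eq_getElem?, List.getElem?_eq_getElem (by omega)] at hz
        exact Option.some.inj hz
      have hne : i ≠ L.length - 1 := fun h => (hA _ hu).2.ne (by simp only [h, hlast])
      exact ⟨i, ⟨by omega, hu⟩, hgetD i hi⟩
    calc A.ncard ≤ ((fun i => L.getD i z) '' I).ncard := Set.ncard_le_ncard hAI (hIfin.image _)
      _ ≤ I.ncard := Set.ncard_image_le hIfin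
      _ = _ := by
        refine (Set.InjOn.ncard_image (fun i hi j hj hij => ?_)).symm
        obtain ⟨hi, -⟩ := hi
        obtain ⟨hj, -⟩ := hj
        simp only [hgetD _ hi, hgetD _ hj] at hij
        have := (List.Nodup.getElem_inj_iff hnd).mp hij
        omega
  · rintro _ ⟨i, ⟨hi, hiA⟩, rfl⟩
    simp only [hgetD _ hi]
    exact ⟨⟨_, hiA, List.isChain_iff_getElem.mp hc i hi⟩, exists_rotation hc hi hz (hA _ hiA).2⟩

theorem isChain_append_singleton_of_adj (hc : L.IsChain G.Adj) (hnd : L.Nodup) {z y : V}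
    (hz : L.getLast? = some z) (hzy : G.Adj z y) (hy : y ∉ L) :
    (L ++ [y]).IsChain G.Adj ∧ (L ++ [y]).Nodup ∧ (L ++ [y]).head? = L.head? ∧
      (L ++ [y]).getLast? = some y := by
  refine ⟨hc.append (List.isChain_singleton y) ?_, List.nodup_append.mpr ⟨hnd, by simp, ?_⟩, ?_,
    by simp⟩
  · simp [hz, hzy]
  · simp only [List.mem_singleton]
    rintro a ha _ rfl rfl
    exact hy ha
  · cases L <;> simp_all

theorem exists_extension [Finite V] (hTS : ∀ u ∈ T, G.neighborSet u ⊆ S)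
    (hdense : G.HalfDense b S T) (hd : 0 ≤ d) (hgap : b < d * f / 2) (hc : L.IsChain G.Adj)
    (hnd : L.Nodup) {z : V} (hz : L.getLast? = some z)
    (hdeg : d ≤ ((G.neighborSet z ∩ T).ncard : ℝ)) (hfree : f ≤ ((T \ {v | v ∈ L}).ncard : ℝ)) :
    ∃ L' : List V, ∃ y ∈ T, L'.IsChain G.Adj ∧ L'.Nodup ∧ L'.head? = L.head? ∧
      L'.getLast? = some y ∧ L'.Perm (L ++ [y]) := by
  by_cases hout : ∃ y ∈ G.neighborSet z ∩ T, y ∉ L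
  · obtain ⟨y, ⟨hzy, hyT⟩, hyL⟩ := hout
    obtain ⟨hc', hnd', hhead, hlast⟩ := isChain_append_singleton_of_adj hc hnd hz hzy hyL
    exact ⟨L ++ [y], y, hyT, hc', hnd', hhead, hlast, .refl _⟩
  -- Otherwise every neighbour of `z` in `T` is on `L`, and rotating at each of them yields at
  -- least `d` endpoints in `S`, one of which has a neighbour in the unused part of `T`.
  push Not at hout
  obtain ⟨R, hRcard, hR⟩ := exists_rotations hc hnd hz (A := G.neighborSet z ∩ T)
    fun u hu => ⟨hout u hu, hu.1.symm⟩
  have hRS : R ⊆ S := fun r hr => by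
    obtain ⟨u, hu, hur⟩ := (hR r hr).1
    exact hTS u hu.2 hur
  have hRd : d ≤ R.ncard := hdeg.trans (mod_cast hRcard)
  have hprod : d * f ≤ R.ncard * (T \ {v | v ∈ L}).ncard :=
    (mul_le_mul_of_nonneg_left hfree hd).trans (mul_le_mul_of_nonneg_right hRd (by positivity))
  obtain ⟨r, hr, y, ⟨hyT, hyL⟩, hry⟩ :=
    hdense.exists_adj (T := T \ {v | v ∈ L}) hRS Set.sdiff_subset (by linarith)
  obtain ⟨L', hc', hperm, hhead, hlast⟩ := (hR r hr).2
  obtain ⟨hc'', hnd'', hhead', hlast'⟩ := isChain_append_singleton_of_adj hc'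
    (hperm.nodup_iff.mpr hnd) hlast hry fun h => hyL (hperm.subset h)
  exact ⟨L' ++ [y], y, hyT, hc'', hnd'', hhead'.trans hhead, hlast', hperm.append_right [y]⟩

theorem IsBipartiteWith.ncard_sdiff_ge [Finite V] (hbip : G.IsBipartiteWith P Q)
    (hc : L.IsChain G.Adj) (hT : T ⊆ Q) :
    (T.ncard : ℝ) - (L.length + 1) / 2 ≤ (T \ {v | v ∈ L}).ncard := by
  classical
  have hsplit : T.ncard ≤ (T \ {v | v ∈ L}).ncard + (Q ∩ {v | v ∈ L}).ncard :=
    (Set.ncard_le_ncard fun v hv => by by_cases h : v ∈ L <;> simp [hv, hT hv, h]).trans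
      (Set.ncard_union_le _ _)
  have hQL : Q ∩ {v | v ∈ L} = ↑(L.filter (· ∈ Q)).toFinset := by ext; simp [and_comm]
  have hcount : 2 * (Q ∩ {v | v ∈ L}).ncard ≤ L.length + 1 := by
    refine le_trans ?_ (List.countP_le_of_isChain (p := (· ∈ Q)) (hc.imp fun a c hac ha => ?_))
    · rw [hQL, Set.ncard_coe_finset, List.countP_eq_length_filter]
      exact Nat.mul_le_mul_left 2 (List.toFinset_card_le _)
    · have hdisj := Set.disjoint_left.mp hbip.disjoint
      rcases hbip.mem_of_adj hac with ⟨haP, -⟩ | ⟨-, hcP⟩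
      · exact absurd (of_decide_eq_true ha) (hdisj haP)
      · exact decide_eq_false (hdisj hcP)
  have h1 : (T.ncard : ℝ) ≤ (T \ {v | v ∈ L}).ncard + (Q ∩ {v | v ∈ L}).ncard := mod_cast hsplit
  have h2 : (2 : ℝ) * (Q ∩ {v | v ∈ L}).ncard ≤ L.length + 1 := mod_cast hcount
  linarith

theorem exists_extension_alternate [Finite V] (hbip : G.IsBipartiteWith P Q)
    (hdense : G.HalfDense b P Q) (hd : 0 ≤ d) (hgap : b < d * f / 2) {s : ℕ}
    (hs : f + (s + 2) / 2 ≤ p) (hT : T ⊆ alternate P Q (s + 1)) (hTp : p ≤ T.ncard)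
    (hTdeg : ∀ v ∈ alternate P Q s, d ≤ ((G.neighborSet v ∩ T).ncard : ℝ))
    (hc : L.IsChain G.Adj) (hnd : L.Nodup) (hlen : L.length = s + 1)
    (hPQ : ∀ v ∈ L, v ∈ P ∪ Q) {z : V} (hz : L.getLast? = some z) (hzs : z ∈ alternate P Q s) :
    ∃ L' : List V, ∃ y ∈ T, L'.IsChain G.Adj ∧ L'.Nodup ∧ L'.head? = L.head? ∧
      L'.getLast? = some y ∧ L'.length = s + 2 ∧ ∀ v ∈ L', v ∈ P ∪ Q := by
  have hTS : ∀ u ∈ T, G.neighborSet u ⊆ alternate P Q s := fun u hu v huv =>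
    alternate_induction_succ (Φ := fun S S' => ∀ u ∈ S', ∀ v, G.Adj u v → v ∈ S)
      (fun u hu v huv => hbip.mem_of_mem_adj' hu huv.symm)
      (fun u hu v huv => hbip.mem_of_mem_adj hu huv) s u (hT hu) v huv
  have hfree := (alternate_induction_succ (Φ := G.IsBipartiteWith) hbip hbip.symm s).ncard_sdiff_ge
    hc hT
  rw [hlen] at hfree
  push_cast at hfree
  obtain ⟨L', y, hyT, hc', hnd', hhead, hlast, hperm⟩ := exists_extension hTS
    ((alternate_induction_succ (Φ := G.HalfDense b) hdense hdense.symm s).mono subset_rfl hT) hd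
    hgap hc hnd hz (hTdeg z hzs) (f := f) (by linarith)
  refine ⟨L', y, hyT, hc', hnd', hhead, hlast, by simp [hperm.length_eq, hlen], fun v hv => ?_⟩
  rcases List.mem_append.mp (hperm.subset hv) with hv | hv
  · exact hPQ v hv
  · rw [List.mem_singleton.mp hv]
    exact alternate_induction (p := (· ⊆ P ∪ Q)) Set.subset_union_left Set.subset_union_right
      (s + 1) (hT hyT)

theorem exists_path_of_isBipartiteWith [Finite V] (hbip : G.IsBipartiteWith P Q)
    (hdense : G.HalfDense b P Q)
    (hdegP : ∀ v ∈ P, d ≤ ((G.neighborSet v ∩ Q).ncard : ℝ))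
    (hdegQ : ∀ v ∈ Q, d ≤ ((G.neighborSet v ∩ P).ncard : ℝ))
    (hP : p ≤ P.ncard) (hQ : p ≤ Q.ncard) (hd : 0 ≤ d) (hgap : b < d * f / 2) (hx : x ∈ P) :
    ∀ t : ℕ, f + (t + 2) / 2 ≤ p → ∀ T ⊆ alternate P Q (t + 1), p ≤ T.ncard →
      (∀ v ∈ alternate P Q t, d ≤ ((G.neighborSet v ∩ T).ncard : ℝ)) →
      ∃ L : List V, ∃ y ∈ T, L.IsChain G.Adj ∧ L.Nodup ∧ L.head? = some x ∧
        L.getLast? = some y ∧ L.length = t + 2 ∧ ∀ v ∈ L, v ∈ P ∪ Q := by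
  intro t
  induction t with
  | zero =>
    intro ht T hT hTp hTdeg
    exact exists_extension_alternate hbip hdense hd hgap (by simpa using ht) hT hTp hTdeg
      (List.isChain_singleton x) (List.nodup_singleton x) rfl (by simp [hx]) rfl (by simpa)
  | succ t ih =>
    intro ht T hT hTp hTdeg
    obtain ⟨L, z, hz, hc, hnd, hhead, hlast, hlen, hPQ⟩ := ih (by push_cast at ht; linarith)
      (alternate P Q (t + 1)) subset_rfl
      (alternate_induction (p := fun S => p ≤ S.ncard) hP hQ (t + 1))
      (alternate_induction_succ (Φ := fun S S' => ∀ v ∈ S, d ≤ ((G.neighborSet v ∩ S').ncard : ℝ))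
        hdegP hdegQ t)
    obtain ⟨L', y, hy, hc', hnd', hhead', hlast', hlen', hPQ'⟩ :=
      exists_extension_alternate hbip hdense hd hgap (s := t + 1) (by push_cast at ht ⊢; linarith)
        hT hTp hTdeg hc hnd hlen hPQ hlast hz
    exact ⟨L', y, hy, hc', hnd', hhead'.trans hhead, hlast', hlen', hPQ'⟩

theorem hasCycleLen_of_isChain {w : V} (hc : (L ++ [w]).IsChain G.Adj)
    (hnd : (L ++ [w]).Nodup) (hw : ∀ x ∈ L.head?, G.Adj w x) (hL : 2 ≤ L.length) :
    HasCycleLen G (L.length + 1) := by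
  obtain ⟨x, l, rfl⟩ := List.exists_cons_of_length_pos (by omega : 0 < L.length)
  have hne : x :: l ++ [w] ≠ [] := by simp
  obtain ⟨p, hp⟩ : ∃ p : G.Walk x w, p.support = x :: l ++ [w] :=
    ⟨(Walk.ofSupport _ hne hc).copy rfl (by simp),
      (Walk.support_copy _ _ _).trans (Walk.support_ofSupport _ _)⟩
  have hlen : p.length + 1 = l.length + 2 := by simp [← Walk.length_support, hp]
  have hwx : G.Adj w x := hw x (by simp)
  refine ⟨w, .cons hwx p, Walk.isCycle_iff_isPath_tail_and_le_length.mpr ⟨?_, ?_⟩, ?_⟩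
  · rw [Walk.tail_cons]
    exact (Walk.isPath_copy _ _ _).mpr ((Walk.isPath_def _).mpr (hp ▸ hnd))
  · simp only [Walk.length_cons, List.length_cons] at hL ⊢
    omega
  · simp only [Walk.length_cons, List.length_cons]
    omega


theorem HalfDense.hasCycleLen_three [Finite V] {w : V} (h : G.HalfDense b P Q)
    (hPQ : Disjoint P Q)
    (hb : b < ((G.neighborSet w ∩ P).ncard : ℝ) * (G.neighborSet w ∩ Q).ncard / 2) :
    HasCycleLen G 3 := by
  obtain ⟨a, ⟨hwa, ha⟩, c, ⟨hwc, hc⟩, hac⟩ :=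
    h.exists_adj Set.inter_subset_right Set.inter_subset_right hb
  have hnd : ([a, c] ++ [w]).Nodup := by
    simp [ne_of_mem_of_not_mem hc (Set.disjoint_left.mp hPQ ha) |>.symm,
      (G.ne_of_adj hwa).symm, (G.ne_of_adj hwc).symm]
  exact hasCycleLen_of_isChain (by simp [hac, (mem_neighborSet _ _ _).mp hwc |>.symm]) hnd
    (by simpa using hwa) (by simp)

theorem neighborSet_between_inter {v : V} (hv : v ∈ P) {S : Set V} (hS : S ⊆ Q) :
    (G.between P Q).neighborSet v ∩ S = G.neighborSet v ∩ S := by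
  ext u
  simp only [Set.mem_inter_iff, mem_neighborSet, between_adj]
  exact ⟨fun h => ⟨h.1.1, h.2⟩, fun h => ⟨⟨h.1, .inl ⟨hv, hS h.2⟩⟩, h.2⟩⟩

theorem hasCycleLen_add_four_of_dense_bipartite [Finite V] {Y : Set V} {w : V} {r : ℝ} {t : ℕ}
    (hPQ : Disjoint P Q) (hdense : G.HalfDense b P Q)
    (hdegP : ∀ v ∈ P, d + r ≤ ((G.neighborSet v ∩ Q).ncard : ℝ))
    (hdegQ : ∀ v ∈ Q, d + r ≤ ((G.neighborSet v ∩ P).ncard : ℝ))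
    (hP : p + r ≤ P.ncard) (hQ : p + r ≤ Q.ncard) (hd : 0 ≤ d) (hgap : b < d * f / 2)
    (ht : f + (t + 2) / 2 ≤ p) (hYdense : G.HalfDense b (alternate P Q (t + 1)) Y)
    (hY : 0 < Y.ncard) (hr : 2 * b ≤ r * Y.ncard) (hYw : Y ⊆ G.neighborSet w)
    (hYPQ : Disjoint Y (P ∪ Q)) (hw : w ∉ P ∪ Q) (hx : x ∈ P) (hwx : G.Adj w x) :
    HasCycleLen G (t + 4) := by
  have hYR : (0 : ℝ) < Y.ncard := mod_cast hY
  have hX : ((alternate P Q (t + 1) \ {v | ∃ y ∈ Y, G.Adj v y}).ncard : ℝ) ≤ r :=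
    le_of_mul_le_mul_right (by linarith [hYdense.ncard_sdiff_mul_le]) hYR
  set B := G.between P Q with hB
  set S := alternate P Q (t + 1)
  set NY := {v | ∃ y ∈ Y, G.Adj v y}
  have hdegP' : ∀ v ∈ P, d + r ≤ ((B.neighborSet v ∩ Q).ncard : ℝ) := fun v hv => by
    rw [neighborSet_between_inter hv subset_rfl]; exact hdegP v hv
  have hdegQ' : ∀ v ∈ Q, d + r ≤ ((B.neighborSet v ∩ P).ncard : ℝ) := fun v hv => by
    rw [hB, between_comm, neighborSet_between_inter hv subset_rfl]; exact hdegQ v hv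
  have hTdeg : ∀ v ∈ alternate P Q t, d ≤ ((B.neighborSet v ∩ (S ∩ NY)).ncard : ℝ) := by
    intro v hv
    have hdeg := alternate_induction_succ
      (Φ := fun S S' => ∀ v ∈ S, d + r ≤ ((B.neighborSet v ∩ S').ncard : ℝ)) hdegP' hdegQ' t v hv
    have hsplit : ((B.neighborSet v ∩ S ∩ NY).ncard : ℝ) + ((B.neighborSet v ∩ S) \ NY).ncard =
        (B.neighborSet v ∩ S).ncard := mod_cast Set.ncard_inter_add_ncard_sdiff_eq_ncard _ _
    have hsub : (((B.neighborSet v ∩ S) \ NY).ncard : ℝ) ≤ (S \ NY).ncard :=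
      mod_cast Set.ncard_le_ncard fun u hu => ⟨hu.1.2, hu.2⟩
    rw [← Set.inter_assoc]
    linarith
  have hTp : p ≤ ((S ∩ NY).ncard : ℝ) := by
    have hsplit : ((S ∩ NY).ncard : ℝ) + (S \ NY).ncard = S.ncard :=
      mod_cast Set.ncard_inter_add_ncard_sdiff_eq_ncard _ _
    linarith [alternate_induction (p := fun S => p + r ≤ (S.ncard : ℝ)) hP hQ (t + 1)]
  have hr0 : 0 ≤ r := (Nat.cast_nonneg _).trans hX
  obtain ⟨L, v, ⟨-, y, hyY, hvy⟩, hc, hnd, hhead, hlast, hlen, hLPQ⟩ :=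
    exists_path_of_isBipartiteWith (between_isBipartiteWith hPQ) hdense.between
      (fun v hv => by linarith [hdegP' v hv]) (fun v hv => by linarith [hdegQ' v hv])
      (by linarith) (by linarith) hd hgap hx t ht _ Set.inter_subset_left hTp hTdeg
  have hyL : y ∉ L := fun h => Set.disjoint_left.mp hYPQ hyY (hLPQ y h)
  obtain ⟨hc', hnd', hhead', hlast'⟩ :=
    isChain_append_singleton_of_adj (hc.imp fun _ _ h => h.1) hnd hlast hvy hyL
  obtain ⟨hc'', hnd'', -, -⟩ := isChain_append_singleton_of_adj hc' hnd' hlast' (hYw hyY).symm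
    (by simpa [not_or] using ⟨fun h => hw (hLPQ w h), G.ne_of_adj (hYw hyY)⟩)
  simpa [hlen] using
    hasCycleLen_of_isChain hc'' hnd'' (by simp [hhead', hhead, hwx]) (by simp [hlen])

theorem hasCycleLen_add_four_of_exceptional [Finite V] {V1 V2 Z Y : Set V} {w : V} {n δ γ : ℝ}
    {t : ℕ} (hδ : 1 ≤ δ) (hδγ : 100 * δ ≤ γ) (hγn : 100 * γ ≤ n) (hdisj : Disjoint V1 V2)
    (hV1 : 0.99 * n ≤ V1.ncard) (hV2 : 0.99 * n ≤ V2.ncard) (hdense : G.HalfDense (δ * γ) V1 V2)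
    (hZ : Z.ncard ≤ 3 * δ + 2)
    (hgood1 : ∀ v ∈ V1 \ Z, (V2.ncard : ℝ) / 2 - γ ≤ (G.neighborSet v ∩ V2).ncard)
    (hgood2 : ∀ v ∈ V2 \ Z, (V1.ncard : ℝ) / 2 - γ ≤ (G.neighborSet v ∩ V1).ncard)
    (hYZ : Y ⊆ Z) (hYw : Y ⊆ G.neighborSet w) (hYV : Y ⊆ alternate V1 V2 t) (hYδ : δ ≤ Y.ncard)
    (hwZ : w ∈ Z) (hx : x ∈ V1 \ Z) (hwx : G.Adj w x) (ht : t + 4 ≤ n) :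
    HasCycleLen G (t + 4) := by
  have hdeg {S S' : Set V}
      (hgood : ∀ v ∈ S \ Z, (S'.ncard : ℝ) / 2 - γ ≤ (G.neighborSet v ∩ S').ncard)
      (hS' : 0.99 * n ≤ S'.ncard) (v : V) (hv : v ∈ S \ Z) :
      0.46 * n + 2 * γ ≤ ((G.neighborSet v ∩ (S' \ Z)).ncard : ℝ) := by
    have := Set.ncard_sub_ncard_le_ncard_sdiff (G.neighborSet v ∩ S') Z
    rw [Set.inter_sdiff_assoc] at this
    linarith [hgood v hv]
  -- Degrees across are `≥ 0.495n - O(n^0.9)` and sides have `≥ 0.99n - O(n^0.8)` vertices; `2γ`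
  -- bounds the number of vertices on one side without a neighbour in `Y`.
  refine hasCycleLen_add_four_of_dense_bipartite (P := V1 \ Z) (Q := V2 \ Z) (Y := Y)
    (d := 0.46 * n) (f := 0.46 * n) (p := 0.96 * n) (r := 2 * γ)
    (hdisj.mono Set.sdiff_subset Set.sdiff_subset) (hdense.mono Set.sdiff_subset Set.sdiff_subset)
    (hdeg hgood1 hV2) (hdeg hgood2 hV1) ?_ ?_ (by linarith) (by nlinarith) (by linarith)
    ((alternate_induction_succ (Φ := G.HalfDense (δ * γ)) hdense hdense.symm (t + 1)).mono
      (alternate_mono Set.sdiff_subset Set.sdiff_subset _)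
      (alternate_add_two V1 V2 t ▸ hYV))
    (by exact_mod_cast (show (0 : ℝ) < Y.ncard by linarith)) (by nlinarith) hYw ?_ (by simp [hwZ])
    hx hwx
  · linarith [Set.ncard_sub_ncard_le_ncard_sdiff V1 Z]
  · linarith [Set.ncard_sub_ncard_le_ncard_sdiff V2 Z]
  · exact Set.disjoint_left.mpr fun y hy h => by rcases h with h | h <;> exact h.2 (hYZ hy)

theorem hasCycleLen_add_four_of_hub [Finite V] {V1 V2 : Set V} {w : V} {n δ γ : ℝ} {t : ℕ}
    (hδ : 1 ≤ δ) (hδγ : 100 * δ ≤ γ) (hγn : 100 * γ ≤ n) (hdisj : Disjoint V1 V2)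
    (hV1 : 0.99 * n ≤ V1.ncard) (hV2 : 0.99 * n ≤ V2.ncard) (hdense : G.HalfDense (δ * γ) V1 V2)
    (hw1 : γ ≤ (G.neighborSet w ∩ V1).ncard) (hw2 : γ ≤ (G.neighborSet w ∩ V2).ncard)
    (ht : t + 4 ≤ n) : HasCycleLen G (t + 4) := by
  have hγ : 0 < γ := by linarith
  obtain ⟨Bad1, hBad1V, hBad1, hgood1⟩ := hdense.exists_lowDegree_subset γ
  obtain ⟨Bad2, hBad2V, hBad2, hgood2⟩ := hdense.symm.exists_lowDegree_subset γ
  replace hBad1 : (Bad1.ncard : ℝ) ≤ δ := le_of_mul_le_mul_right (by linarith) hγ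
  replace hBad2 : (Bad2.ncard : ℝ) ≤ δ := le_of_mul_le_mul_right (by linarith) hγ
  set A1 := (G.neighborSet w ∩ V1) \ Bad1
  set A2 := (G.neighborSet w ∩ V2) \ Bad2
  have hA1 := Set.ncard_sub_ncard_le_ncard_sdiff (G.neighborSet w ∩ V1) Bad1
  have hA2 := Set.ncard_sub_ncard_le_ncard_sdiff (G.neighborSet w ∩ V2) Bad2
  have hceil : (⌈δ⌉₊ : ℝ) < δ + 1 := Nat.ceil_lt_add_one (by linarith)
  obtain ⟨Y, hYA, hYcard⟩ := Set.exists_subset_card_eq (s := alternate A1 A2 t) (n := ⌈δ⌉₊) <| by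
    have := alternate_induction (P := A1) (Q := A2) (p := fun S => γ - δ ≤ (S.ncard : ℝ))
      (by linarith) (by linarith) t
    exact_mod_cast (show (⌈δ⌉₊ : ℝ) ≤ (alternate A1 A2 t).ncard by linarith)
  obtain ⟨x, ⟨⟨hwx, hxV1⟩, hxBad1⟩, hxY⟩ := Set.sdiff_nonempty_of_ncard_lt_ncard (s := Y) (t := A1)
    (by exact_mod_cast (show (Y.ncard : ℝ) < A1.ncard by rw [hYcard]; linarith))
  set Z := Bad1 ∪ Bad2 ∪ Y ∪ {w}
  have hZ : (Z.ncard : ℝ) ≤ 3 * δ + 2 := by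
    have h1 : Z.ncard ≤ _ := Set.ncard_union_le (Bad1 ∪ Bad2 ∪ Y) {w}
    have h2 := Set.ncard_union_le (Bad1 ∪ Bad2) Y
    have h3 := Set.ncard_union_le Bad1 Bad2
    rw [Set.ncard_singleton] at h1
    have : (Z.ncard : ℝ) ≤ Bad1.ncard + Bad2.ncard + Y.ncard + 1 := by exact_mod_cast (by omega)
    linarith [hYcard ▸ hceil]
  refine hasCycleLen_add_four_of_exceptional hδ hδγ hγn hdisj hV1 hV2 hdense hZ
    (fun v hv => hgood1 v ⟨hv.1, fun h => hv.2 (by simp [Z, h])⟩)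
    (fun v hv => hgood2 v ⟨hv.1, fun h => hv.2 (by simp [Z, h])⟩) (fun y hy => by simp [Z, hy])
    (hYA.trans (alternate_induction (p := (· ⊆ G.neighborSet w)) (fun v hv => hv.1.1)
      (fun v hv => hv.1.1) t))
    (hYA.trans (alternate_mono (fun v hv => hv.1.2) (fun v hv => hv.1.2) t))
    (hYcard ▸ Nat.le_ceil δ) (by simp [Z]) ⟨hxV1, ?_⟩ hwx ht
  simp only [Z, Set.mem_union, Set.mem_singleton_iff, not_or]
  exact ⟨⟨⟨hxBad1, fun h => Set.disjoint_left.mp hdisj hxV1 (hBad2V h)⟩, hxY⟩,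
    (G.ne_of_adj hwx).symm⟩

end SimpleGraph

/-- For sufficiently large `n`: if the edges of an `n`-fit graph are 2-colored,
`V1, V2` are disjoint sets of size at least `0.99n` with all edges between them blue, and
some vertex `w` has at least `n^0.9` blue neighbors in each of `V1` and `V2`, then the blue
graph contains `C_ℓ` for every `3 ≤ ℓ ≤ n`. -/
theorem blue_hub_gives_blue_cycles :
    ∃ N : ℕ, ∀ n : ℕ, N ≤ n →
    ∀ (V : Type) (G : SimpleGraph V), IsNFit n G →
    ∀ R : SimpleGraph V, R ≤ G →
    ∀ V1 V2 : Set V, Disjoint V1 V2 →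
    (0.99 : ℝ) * n ≤ (V1.ncard : ℝ) → (0.99 : ℝ) * n ≤ (V2.ncard : ℝ) →
    (∀ v ∈ V1, ∀ w ∈ V2, G.Adj v w → ¬ R.Adj v w) →
    (∃ w : V, (n : ℝ) ^ (0.9 : ℝ) ≤ (((G \ R).neighborSet w ∩ V1).ncard : ℝ) ∧
              (n : ℝ) ^ (0.9 : ℝ) ≤ (((G \ R).neighborSet w ∩ V2).ncard : ℝ)) →
    ∀ ℓ : ℕ, 3 ≤ ℓ → ℓ ≤ n → HasCycleLen (G \ R) ℓ := by
  refine ⟨10 ^ 20, fun n hn V G hfit R _ V1 V2 hdisj hV1 hV2 hblue ⟨w, hw1, hw2⟩ ℓ hℓ hℓn => ?_⟩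
  have : Finite V := Nat.finite_of_card_ne_zero (by rw [hfit.1]; omega)
  have hn : (10 : ℝ) ^ 20 ≤ n := by exact_mod_cast hn
  have hδ : 1 ≤ (n : ℝ) ^ (0.8 : ℝ) := Real.one_le_rpow (by linarith) (by norm_num)
  have hδγ : 100 * (n : ℝ) ^ (0.8 : ℝ) ≤ (n : ℝ) ^ (0.9 : ℝ) := by
    simpa [show (0.8 : ℝ) + 0.1 = 0.9 by norm_num] using Real.hundred_mul_rpow_le hn 0.8
  have hγn : 100 * (n : ℝ) ^ (0.9 : ℝ) ≤ n := by
    simpa [show (0.9 : ℝ) + 0.1 = 1 by norm_num] using Real.hundred_mul_rpow_le hn 0.9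
  have hdense : (G \ R).HalfDense ((n : ℝ) ^ (0.8 : ℝ) * (n : ℝ) ^ (0.9 : ℝ)) V1 V2 :=
    fun S hS T hT => by
      rw [← Real.rpow_add (by positivity), show (0.8 : ℝ) + 0.9 = 1.7 by norm_num,
        interCount_congr (H := G) fun a ha c hc => by
          simpa [sdiff_adj] using hblue a (hS ha) c (hT hc)]
      linarith [(abs_le.mp (hfit.2.2.2.2.2 S T)).1]
  obtain rfl | ⟨t, rfl⟩ : ℓ = 3 ∨ ∃ t, ℓ = t + 4 :=
    (eq_or_lt_of_le hℓ).imp Eq.symm fun h => ⟨ℓ - 4, by omega⟩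
  · have hγ : 0 < (n : ℝ) ^ (0.9 : ℝ) := by linarith
    refine hdense.hasCycleLen_three (w := w) hdisj ?_
    nlinarith [mul_le_mul hw1 hw2 hγ.le (by positivity), mul_le_mul_of_nonneg_right hδγ hγ.le,
      mul_pos hγ hγ]
  · exact hasCycleLen_add_four_of_hub hδ hδγ hγn hdisj hV1 hV2 hdense hw1 hw2 (mod_cast hℓn)
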